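/- Let l be a prime and N a torsion-free abelian group such that N/lN is finite. If y₁, …, y_r are elements of N whose images form a basis of N/lN as an 𝔽_l-vector space, then for every n ≥ 1 the quotient N/lⁿN is a free ℤ/lⁿℤ-module with basis the images of y₁, …, y_r; in particular N/lⁿN has order l^{nr}. -/

import Mathlib

/-!
The images of the `yᵢ` span `N/lᵏN` over `ℤ/lᵏℤ`: if `S + lN = N` for the subgroup `S` they
generate, then `S + lᵏN = N`, by splitting the `lᵏN`-part once more modulo `S + lN`.
They are independent: if `∑ cᵢ yᵢ ∈ lᵏ⁺¹N ⊆ lN`, independence modulo `l` gives `cᵢ = l dᵢ`, and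
since multiplication by `l` is injective on the torsion-free group `N`, `∑ dᵢ yᵢ ∈ lᵏN`, so
`lᵏ ∣ dᵢ` by induction.
-/

universe u

/-- The subgroup `nN = {n • x : x ∈ N}` of an abelian group `N`. -/
def smulRange (n : ℕ) (N : Type u) [AddCommGroup N] : AddSubgroup N where
  carrier := Set.range fun x : N => n • x
  zero_mem' := ⟨0, smul_zero n⟩
  add_mem' := by rintro _ _ ⟨a, rfl⟩ ⟨b, rfl⟩; exact ⟨a + b, smul_add n a b⟩
  neg_mem' := by rintro _ ⟨a, rfl⟩; exact ⟨-a, smul_neg n a⟩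

/-- `N/nN` is naturally a module over `ℤ/nℤ`. -/
noncomputable instance (n : ℕ) (N : Type u) [AddCommGroup N] :
    Module (ZMod n) (N ⧸ smulRange n N) :=
  QuotientAddGroup.zmodModule fun x => ⟨x, rfl⟩

open Submodule

namespace smulRange

variable {N : Type u} [AddCommGroup N] {ι : Type*} [Fintype ι] {y : ι → N} {m l : ℕ}

theorem mem_iff {x : N} : x ∈ smulRange m N ↔ ∃ z : N, m • z = x := Iff.rfl

theorem smul_mem (x : N) : m • x ∈ smulRange m N := ⟨x, rfl⟩

theorem sum_intCast_smul_mk (c : ι → ℤ) :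
    ∑ i, (c i : ZMod m) • (y i : N ⧸ smulRange m N) =
      ((∑ i, c i • y i : N) : N ⧸ smulRange m N) := by
  simp only [Int.cast_smul_eq_zsmul, QuotientAddGroup.mk_sum, QuotientAddGroup.mk_zsmul]

theorem linearIndependent_mk_iff :
    LinearIndependent (ZMod m) (fun i => (y i : N ⧸ smulRange m N)) ↔
      ∀ c : ι → ℤ, ∑ i, c i • y i ∈ smulRange m N → ∀ i, (m : ℤ) ∣ c i := by
  simp only [Fintype.linearIndependent_iff]
  constructor
  · intro h c hc i
    rw [← ZMod.intCast_zmod_eq_zero_iff_dvd]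
    refine h (fun i => (c i : ZMod m)) ?_ i
    rwa [sum_intCast_smul_mk, QuotientAddGroup.eq_zero_iff]
  · intro h g hg i
    rw [← ZMod.intCast_zmod_cast (g i), ZMod.intCast_zmod_eq_zero_iff_dvd]
    refine h (fun i => (g i).cast) ?_ i
    rw [← QuotientAddGroup.eq_zero_iff, ← sum_intCast_smul_mk]
    simpa only [ZMod.intCast_zmod_cast] using hg

theorem mk_mem_span_range_mk_iff {x : N} :
    (x : N ⧸ smulRange m N) ∈ span (ZMod m) (Set.range fun i => (y i : N ⧸ smulRange m N)) ↔
      x ∈ (span ℤ (Set.range y)).toAddSubgroup ⊔ smulRange m N := by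
  simp only [mem_span_range_iff_exists_fun, AddSubgroup.mem_sup, Submodule.mem_toAddSubgroup]
  constructor
  · rintro ⟨g, hg⟩
    refine ⟨∑ i, (g i).cast • y i, ⟨_, rfl⟩, _, ?_, add_neg_cancel_left _ x⟩
    rw [← QuotientAddGroup.eq, ← hg, ← sum_intCast_smul_mk]
    simp only [ZMod.intCast_zmod_cast]
  · rintro ⟨_, ⟨c, rfl⟩, t, ht, rfl⟩
    refine ⟨fun i => c i, ?_⟩
    rw [sum_intCast_smul_mk, QuotientAddGroup.mk_add, (QuotientAddGroup.eq_zero_iff t).2 ht,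
      add_zero]

theorem span_range_mk_eq_top_iff :
    span (ZMod m) (Set.range fun i => (y i : N ⧸ smulRange m N)) = ⊤ ↔
      (span ℤ (Set.range y)).toAddSubgroup ⊔ smulRange m N = ⊤ := by
  simp only [eq_top_iff', AddSubgroup.eq_top_iff', ← mk_mem_span_range_mk_iff,
    QuotientAddGroup.mk_surjective.forall]

theorem sup_pow_eq_top {S : AddSubgroup N} (h : S ⊔ smulRange l N = ⊤) (k : ℕ) :
    S ⊔ smulRange (l ^ k) N = ⊤ := by
  induction k with
  | zero => exact eq_top_iff.2 fun x _ => AddSubgroup.mem_sup_right ⟨x, by simp⟩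
  | succ k ih =>
    refine (AddSubgroup.eq_top_iff' _).2 fun x => ?_
    obtain ⟨s, hs, _, ht, rfl⟩ := AddSubgroup.mem_sup.1 (ih ▸ AddSubgroup.mem_top x)
    obtain ⟨z, rfl⟩ := mem_iff.1 ht
    obtain ⟨s', hs', _, ht', rfl⟩ := AddSubgroup.mem_sup.1 (h ▸ AddSubgroup.mem_top z)
    obtain ⟨w, rfl⟩ := mem_iff.1 ht'
    refine AddSubgroup.mem_sup.2
      ⟨s + l ^ k • s', S.add_mem hs (S.nsmul_mem hs' _), _, smul_mem w, ?_⟩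
    rw [smul_add, smul_smul, pow_succ, add_assoc]

theorem pow_dvd_of_sum_mem (hl : IsSMulRegular N l)
    (h : ∀ c : ι → ℤ, ∑ i, c i • y i ∈ smulRange l N → ∀ i, (l : ℤ) ∣ c i) (k : ℕ) :
    ∀ c : ι → ℤ, ∑ i, c i • y i ∈ smulRange (l ^ k) N → ∀ i, (l : ℤ) ^ k ∣ c i := by
  induction k with
  | zero => simp
  | succ k ih =>
    intro c hc
    obtain ⟨z, hz⟩ := mem_iff.1 hc
    have hz' : l • l ^ k • z = ∑ i, c i • y i := by rw [smul_smul, ← pow_succ', hz]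
    choose d hd using h c (hz' ▸ smul_mem _)
    have hd_sum : ∑ i, d i • y i = l ^ k • z := hl <| show l • _ = l • _ by
      rw [hz', Finset.smul_sum]
      refine Finset.sum_congr rfl fun i _ => ?_
      rw [← natCast_zsmul, smul_smul, hd i]
    intro i
    rw [hd i, pow_succ']
    exact mul_dvd_mul_left _ (ih d ⟨z, hd_sum.symm⟩ i)

theorem linearIndependent_mk_pow (hl : IsSMulRegular N l)
    (h : LinearIndependent (ZMod l) (fun i => (y i : N ⧸ smulRange l N))) (k : ℕ) :
    LinearIndependent (ZMod (l ^ k)) (fun i => (y i : N ⧸ smulRange (l ^ k) N)) := by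
  rw [linearIndependent_mk_iff] at h ⊢
  exact_mod_cast pow_dvd_of_sum_mem hl h k

theorem span_range_mk_pow_eq_top
    (h : span (ZMod l) (Set.range fun i => (y i : N ⧸ smulRange l N)) = ⊤) (k : ℕ) :
    span (ZMod (l ^ k)) (Set.range fun i => (y i : N ⧸ smulRange (l ^ k) N)) = ⊤ := by
  rw [span_range_mk_eq_top_iff] at h ⊢
  exact sup_pow_eq_top h k

end smulRange

theorem quotient_lpow_free_over_zmod_general
    {N : Type u} [AddCommGroup N]
    (htf : ∀ (n : ℕ) (x : N), 1 ≤ n → n • x = 0 → x = 0)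
    (l : ℕ) (hl : l.Prime)
    (r : ℕ) (y : Fin r → N)
    (b : Module.Basis (Fin r) (ZMod l) (N ⧸ smulRange l N))
    (hb : ∀ i, b i = (QuotientAddGroup.mk (y i) : N ⧸ smulRange l N))
    (n : ℕ) :
    (∃ c : Module.Basis (Fin r) (ZMod (l ^ n)) (N ⧸ smulRange (l ^ n) N),
      ∀ i, c i = (QuotientAddGroup.mk (y i) : N ⧸ smulRange (l ^ n) N)) ∧
    Nat.card (N ⧸ smulRange (l ^ n) N) = l ^ (n * r) := by
  have hreg : IsSMulRegular N l := fun x x' h =>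
    sub_eq_zero.1 <| htf l _ hl.one_lt.le <| by rw [smul_sub]; exact sub_eq_zero.2 h
  have hby : ⇑b = fun i => (y i : N ⧸ smulRange l N) := funext hb
  let c := Module.Basis.mk
    (smulRange.linearIndependent_mk_pow hreg (hby ▸ b.linearIndependent) n)
    (smulRange.span_range_mk_pow_eq_top (hby ▸ b.span_eq) n).ge
  refine ⟨⟨c, Module.Basis.mk_apply _ _⟩, ?_⟩
  rw [Nat.card_congr c.equivFun.toEquiv, Nat.card_fun, Nat.card_zmod, Nat.card_fin, pow_mul]

/-- Let `l` be a prime and `N` a torsion-free abelian group with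
`N/lN` finite.  If `y₁, …, y_r` are elements of `N` whose images form a basis of `N/lN`
as an `𝔽_l`-vector space, then for every `n ≥ 1` the quotient `N/lⁿN` is a free
`ℤ/lⁿℤ`-module with basis the images of `y₁, …, y_r`; in particular `N/lⁿN` has
order `l^(n·r)`. -/
theorem quotient_lpow_free_over_zmod
    {N : Type u} [AddCommGroup N]
    (htf : ∀ (n : ℕ) (x : N), 1 ≤ n → n • x = 0 → x = 0)
    (l : ℕ) (hl : l.Prime) (hfin : Finite (N ⧸ smulRange l N))
    (r : ℕ) (y : Fin r → N)
    (b : Module.Basis (Fin r) (ZMod l) (N ⧸ smulRange l N))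
    (hb : ∀ i, b i = (QuotientAddGroup.mk (y i) : N ⧸ smulRange l N))
    (n : ℕ) (hn : 1 ≤ n) :
    (∃ c : Module.Basis (Fin r) (ZMod (l ^ n)) (N ⧸ smulRange (l ^ n) N),
      ∀ i, c i = (QuotientAddGroup.mk (y i) : N ⧸ smulRange (l ^ n) N)) ∧
    Nat.card (N ⧸ smulRange (l ^ n) N) = l ^ (n * r) :=
  quotient_lpow_free_over_zmod_general htf l hl r y b hb n
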